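/- Let G ⊆ O(d) be a compact group with Haar probability measure Λ₀, let Λ be any Borel probability measure on G, let θ*, θ ∈ ℝ^d, σ > 0. Define p_θ(y) = ∫_G (2πσ²)^{-d/2} exp(−‖y − g·θ‖²/(2σ²)) dΛ₀(g) and ℓ(θ; Λ₀, Λ) = −∫_G ∫_{ℝ^d} log(p_θ(y)) (2πσ²)^{-d/2} exp(−‖y − g̃·θ*‖²/(2σ²)) dy dΛ(g̃). Then ℓ(θ; Λ₀, Λ) = ℓ(θ; Λ₀, Λ₀) for every Λ; i.e., the misspecified negative population log-likelihood without projection is invariant in the data-generating group measure. -/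

import Mathlib

set_option maxHeartbeats 1000000
open MeasureTheory Matrix Real

/-- The squared Euclidean norm on `ℝ^d`. -/
noncomputable def sqNorm {d : ℕ} (v : Fin d → ℝ) : ℝ := ∑ i, v i ^ 2

lemma sqNorm_eq_dot {d : ℕ} (v : Fin d → ℝ) : sqNorm v = v ⬝ᵥ v := by
  simp [sqNorm, dotProduct, sq]

lemma star_eq_transpose {d : ℕ} (A : Matrix (Fin d) (Fin d) ℝ) : star A = Aᵀ := by
  ext i j; simp [Matrix.star_apply]

lemma sqNorm_mulVec_orth {d : ℕ} (A : Matrix.orthogonalGroup (Fin d) ℝ) (v : Fin d → ℝ) :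
    sqNorm ((A : Matrix (Fin d) (Fin d) ℝ).mulVec v) = sqNorm v := by
  have hA : (star A.1) * A.1 = 1 := (Matrix.mem_orthogonalGroup_iff' (Fin d) ℝ).mp A.2
  rw [star_eq_transpose] at hA
  rw [sqNorm_eq_dot, sqNorm_eq_dot, Matrix.dotProduct_mulVec, ← Matrix.mulVec_transpose,
    Matrix.mulVec_mulVec, hA, Matrix.one_mulVec]

lemma abs_det_orth {d : ℕ} (A : Matrix.orthogonalGroup (Fin d) ℝ) :
    |(A : Matrix (Fin d) (Fin d) ℝ).det| = 1 := by
  have hA : (star A.1) * A.1 = 1 := (Matrix.mem_orthogonalGroup_iff' (Fin d) ℝ).mp A.2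
  rw [star_eq_transpose] at hA
  have := congrArg Matrix.det hA
  rw [Matrix.det_mul, Matrix.det_transpose, Matrix.det_one] at this
  nlinarith [abs_nonneg (A : Matrix (Fin d) (Fin d) ℝ).det,
    sq_abs (A : Matrix (Fin d) (Fin d) ℝ).det]

lemma integral_comp_orth {d : ℕ} (A : Matrix.orthogonalGroup (Fin d) ℝ)
    (f : (Fin d → ℝ) → ℝ) :
    ∫ y : Fin d → ℝ, f ((A : Matrix (Fin d) (Fin d) ℝ).mulVec y) = ∫ y : Fin d → ℝ, f y := by
  set e := Matrix.UnitaryGroup.toLinearEquiv A with he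
  have hdet : LinearMap.det (e.toLinearMap) = (A : Matrix (Fin d) (Fin d) ℝ).det := by
    show LinearMap.det (Matrix.toLin' A.1) = _
    exact LinearMap.det_toLin' A.1
  have hdet0 : LinearMap.det (e.toLinearMap) ≠ 0 := by
    rw [hdet]; intro h; simpa [h] using abs_det_orth A
  have hmap : Measure.map e volume = volume := by
    rw [show (⇑e : (Fin d → ℝ) → Fin d → ℝ) = ⇑e.toLinearMap from rfl]
    rw [Real.map_linearMap_volume_pi_eq_smul_volume_pi hdet0, hdet, abs_inv, abs_det_orth A]
    simp
  have hemb : MeasurableEmbedding (⇑e) := by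
    have := e.toContinuousLinearEquiv.toHomeomorph.measurableEmbedding
    simpa using this
  have hmp : MeasurePreserving (⇑e) volume volume := ⟨hemb.measurable, hmap⟩
  have h := hmp.integral_comp hemb f
  have heapp : ∀ y, e y = (A : Matrix (Fin d) (Fin d) ℝ).mulVec y := fun y =>
    Matrix.toLin'_apply A.1 y
  simpa [heapp] using h

/-- Without projection, the misspecified negative population log-likelihood
`ℓ(θ; Λ₀, Λ)` (model marginalized over the Haar measure `Λ₀`, data generated with group
measure `Λ`) does not depend on the data-generating group measure `Λ`:
`ℓ(θ; Λ₀, Λ) = ℓ(θ; Λ₀, Λ₀)`. -/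
theorem stmt_2 {d : ℕ} {G : Type*} [Group G] [TopologicalSpace G] [IsTopologicalGroup G]
    [CompactSpace G] [MeasurableSpace G] [BorelSpace G]
    (Λ₀ : Measure G) [Λ₀.IsHaarMeasure] [IsProbabilityMeasure Λ₀]
    (Λ : Measure G) [IsProbabilityMeasure Λ]
    (ρ : G →* Matrix.orthogonalGroup (Fin d) ℝ)
    (hρ : Continuous fun g => (ρ g : Matrix (Fin d) (Fin d) ℝ))
    (θstar θ : Fin d → ℝ) (σ : ℝ) (hσ : 0 < σ)
    (p : (Fin d → ℝ) → ℝ)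
    (hp : ∀ y, p y = ∫ g, (2 * π * σ ^ 2) ^ (-(d : ℝ) / 2) *
        Real.exp (-sqNorm (y - (ρ g : Matrix (Fin d) (Fin d) ℝ).mulVec θ) / (2 * σ ^ 2)) ∂Λ₀)
    (hint : ∀ g0 : G, Integrable (fun y : Fin d → ℝ =>
        Real.log (p y) * ((2 * π * σ ^ 2) ^ (-(d : ℝ) / 2) *
          Real.exp (-sqNorm (y - (ρ g0 : Matrix (Fin d) (Fin d) ℝ).mulVec θstar)
            / (2 * σ ^ 2))))) :
    -(∫ g0, (∫ y : Fin d → ℝ, Real.log (p y) * ((2 * π * σ ^ 2) ^ (-(d : ℝ) / 2) *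
          Real.exp (-sqNorm (y - (ρ g0 : Matrix (Fin d) (Fin d) ℝ).mulVec θstar)
            / (2 * σ ^ 2)))) ∂Λ)
      = -(∫ g0, (∫ y : Fin d → ℝ, Real.log (p y) * ((2 * π * σ ^ 2) ^ (-(d : ℝ) / 2) *
          Real.exp (-sqNorm (y - (ρ g0 : Matrix (Fin d) (Fin d) ℝ).mulVec θstar)
            / (2 * σ ^ 2)))) ∂Λ₀) := by
  set c : ℝ := (2 * π * σ ^ 2) ^ (-(d : ℝ) / 2) with hc
  -- invariance of p under the group action
  have hpinv : ∀ (g0 : G) (y : Fin d → ℝ),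
      p ((ρ g0 : Matrix (Fin d) (Fin d) ℝ).mulVec y) = p y := by
    intro g0 y
    calc p ((ρ g0 : Matrix (Fin d) (Fin d) ℝ).mulVec y)
        = ∫ g, c * Real.exp (-sqNorm ((ρ g0 : Matrix (Fin d) (Fin d) ℝ).mulVec y
            - (ρ (g0 * g) : Matrix (Fin d) (Fin d) ℝ).mulVec θ) / (2 * σ ^ 2)) ∂Λ₀ := by
          rw [hp]
          exact (MeasureTheory.integral_mul_left_eq_self
            (fun g => c * Real.exp (-sqNorm ((ρ g0 : Matrix (Fin d) (Fin d) ℝ).mulVec y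
              - (ρ g : Matrix (Fin d) (Fin d) ℝ).mulVec θ) / (2 * σ ^ 2))) g0).symm
      _ = ∫ g, c * Real.exp (-sqNorm (y
            - (ρ g : Matrix (Fin d) (Fin d) ℝ).mulVec θ) / (2 * σ ^ 2)) ∂Λ₀ := by
          refine integral_congr_ae (Filter.Eventually.of_forall fun g => ?_)
          have hsq : sqNorm ((ρ g0 : Matrix (Fin d) (Fin d) ℝ).mulVec y
              - (ρ (g0 * g) : Matrix (Fin d) (Fin d) ℝ).mulVec θ)
              = sqNorm (y - (ρ g : Matrix (Fin d) (Fin d) ℝ).mulVec θ) := by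
            rw [_root_.map_mul, Matrix.UnitaryGroup.mul_val, ← Matrix.mulVec_mulVec,
              ← Matrix.mulVec_sub, sqNorm_mulVec_orth]
          simp only
          rw [hsq]
      _ = p y := (hp y).symm
  -- the inner integral does not depend on g0
  have hF : ∀ g0 : G,
      (∫ y : Fin d → ℝ, Real.log (p y) * (c *
          Real.exp (-sqNorm (y - (ρ g0 : Matrix (Fin d) (Fin d) ℝ).mulVec θstar)
            / (2 * σ ^ 2))))
      = ∫ y : Fin d → ℝ, Real.log (p y) * (c *
          Real.exp (-sqNorm (y - θstar) / (2 * σ ^ 2))) := by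
    intro g0
    rw [← integral_comp_orth (ρ g0) (fun y => Real.log (p y) * (c *
        Real.exp (-sqNorm (y - (ρ g0 : Matrix (Fin d) (Fin d) ℝ).mulVec θstar)
          / (2 * σ ^ 2))))]
    refine integral_congr_ae (Filter.Eventually.of_forall fun y => ?_)
    simp only
    rw [hpinv g0 y, ← Matrix.mulVec_sub, sqNorm_mulVec_orth]
  simp only [hF]
  rw [integral_const, integral_const, probReal_univ, probReal_univ]
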